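/- arXiv:2106.10785 — 3 statements merged into one kernel-verified Lean document; each statement's English description precedes it below -/
import Mathlib

section
/- Let B ∈ ℝ^{N×N} have nonnegative entries and let a, b > 0. Then the set function h(S) = (1/(a+b)) Σ_{j=1}^N (min(Σ_{i∈S} B_{ji}, a) + b) is monotone nondecreasing and submodular. -/
/-!
Each summand `S ↦ min (∑ i ∈ S, B j i) a` is a concave nondecreasing function of the
nonnegative modular function `S ↦ ∑ i ∈ S, B j i`, so the gain of adding `x` can only shrink
as `S` grows. Sums of such functions are monotone and submodular, and adding the constant `b` to
each summand and scaling by `1 / (a + b) > 0` preserves both properties.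
-/

open Finset

lemma min_add_sub_min_le_of_le {a c s t : ℝ} (hc : 0 ≤ c) (hst : s ≤ t) :
    min (t + c) a - min t a ≤ min (s + c) a - min s a := by
  simp only [min_def]
  split_ifs <;> linarith

section SaturatedCoverage

variable {ι κ : Type*} [Fintype κ]

def saturatedCoverage (w : κ → ι → ℝ) (a : ℝ) (S : Finset ι) : ℝ :=
  ∑ j, min (∑ i ∈ S, w j i) a

variable {w : κ → ι → ℝ}

lemma saturatedCoverage_mono (hw : ∀ j i, 0 ≤ w j i) (a : ℝ) :
    Monotone (saturatedCoverage w a) := fun _ _ hST =>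
  sum_le_sum fun j _ =>
    min_le_min_right a (sum_le_sum_of_subset_of_nonneg hST fun i _ _ => hw j i)

lemma saturatedCoverage_insert_sub_le [DecidableEq ι] (hw : ∀ j i, 0 ≤ w j i) (a : ℝ)
    {S T : Finset ι} (hST : S ⊆ T) {x : ι} (hxT : x ∉ T) :
    saturatedCoverage w a (insert x T) - saturatedCoverage w a T
      ≤ saturatedCoverage w a (insert x S) - saturatedCoverage w a S := by
  have hxS : x ∉ S := fun h => hxT (hST h)
  simp only [saturatedCoverage, ← sum_sub_distrib, sum_insert hxT, sum_insert hxS,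
    add_comm (w _ x)]
  exact sum_le_sum fun j _ => min_add_sub_min_le_of_le (hw j x)
    (sum_le_sum_of_subset_of_nonneg hST fun i _ _ => hw j i)

end SaturatedCoverage

/-- For nonnegative B and a, b > 0, the set function
h(S) = (1/(a+b)) Σ_j (min(Σ_{i∈S} B j i, a) + b) is monotone nondecreasing
and submodular. -/
theorem stmt_5 (N : ℕ) (B : Matrix (Fin N) (Fin N) ℝ)
    (hB : ∀ j i, 0 ≤ B j i) (a b : ℝ) (ha : 0 < a) (hb : 0 < b) :
    (∀ S T : Finset (Fin N), S ⊆ T →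
      (1 / (a + b)) * ∑ j, (min (∑ i ∈ S, B j i) a + b)
        ≤ (1 / (a + b)) * ∑ j, (min (∑ i ∈ T, B j i) a + b)) ∧
    (∀ S T : Finset (Fin N), S ⊆ T → ∀ x ∉ T,
      (1 / (a + b)) * ∑ j, (min (∑ i ∈ insert x T, B j i) a + b)
          - (1 / (a + b)) * ∑ j, (min (∑ i ∈ T, B j i) a + b)
        ≤ (1 / (a + b)) * ∑ j, (min (∑ i ∈ insert x S, B j i) a + b)
          - (1 / (a + b)) * ∑ j, (min (∑ i ∈ S, B j i) a + b)) := by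
  have hscale : 0 ≤ 1 / (a + b) := by positivity
  have hsum : ∀ S : Finset (Fin N),
      ∑ j, (min (∑ i ∈ S, B j i) a + b) = saturatedCoverage B a S + ∑ _j : Fin N, b :=
    fun _ => sum_add_distrib
  simp only [hsum, ← mul_sub, add_sub_add_right_eq_sub]
  refine ⟨fun S T hST => ?_, fun S T hST x hxT => ?_⟩
  · gcongr
    exact saturatedCoverage_mono hB a hST
  · exact mul_le_mul_of_nonneg_left (saturatedCoverage_insert_sub_le hB a hST hxT) hscale
end

section
/- Let B ∈ ℝ^{N×N} have nonnegative entries and σ > 0. Then the set function h(S) = (1/2) Σ_{j=1}^N (1 + erf((Σ_{i∈S} B_{ji})/(σ√2))) is monotone nondecreasing and submodular. -/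
open Real

/-- The Gauss error function erf(x) = (2/√π) ∫_0^x e^{−t²} dt. -/
noncomputable def erf (x : ℝ) : ℝ :=
  (2 / Real.sqrt π) * ∫ t in (0 : ℝ)..x, Real.exp (-t ^ 2)

/-!
Each summand is a concave nondecreasing function of a nonnegative modular function of `S`:
`erf` has the decreasing density `e^{-t²}` on `[0, ∞)`, so its increments `erf (t + c) - erf t`
decrease in `t ≥ 0`. Adding an element `x` to `S` raises the `j`-th argument by `B j x ≥ 0`,
and a larger set starts from a larger argument, hence gains less.
-/

open Finset

theorem intervalIntegral.integral_add_le_of_antitoneOn {f : ℝ → ℝ} (hf : Continuous f)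
    {s t c : ℝ} (hanti : AntitoneOn f (Set.Ici s)) (hst : s ≤ t) (hc : 0 ≤ c) :
    ∫ u in t..t + c, f u ≤ ∫ u in s..s + c, f u := by
  have hshift : ∫ u in t..t + c, f u = ∫ u in s..s + c, f (u + (t - s)) := by
    rw [intervalIntegral.integral_comp_add_right f (t - s)]
    congr 1 <;> ring
  rw [hshift]
  refine intervalIntegral.integral_mono_on (by linarith)
    ((hf.comp (continuous_add_const _)).intervalIntegrable _ _) (hf.intervalIntegrable _ _) ?_
  intro u hu
  exact hanti hu.1 (Set.mem_Ici.2 (by linarith [hu.1])) (by linarith)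

lemma continuous_exp_neg_sq : Continuous fun t : ℝ => exp (-t ^ 2) := by
  fun_prop

lemma antitoneOn_exp_neg_sq : AntitoneOn (fun t : ℝ => exp (-t ^ 2)) (Set.Ici 0) := by
  intro a ha b _ hab
  have hsq : a ^ 2 ≤ b ^ 2 := pow_le_pow_left₀ ha hab 2
  exact exp_le_exp.2 (by linarith)

lemma erf_sub_erf (a b : ℝ) :
    erf b - erf a = (2 / sqrt π) * ∫ t in a..b, exp (-t ^ 2) := by
  rw [erf, erf, ← mul_sub, intervalIntegral.integral_interval_sub_left
    (continuous_exp_neg_sq.intervalIntegrable 0 b) (continuous_exp_neg_sq.intervalIntegrable 0 a)]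

lemma erf_monotone : Monotone erf := by
  intro a b hab
  have hinc : 0 ≤ erf b - erf a := by
    rw [erf_sub_erf]
    exact mul_nonneg (by positivity)
      (intervalIntegral.integral_nonneg hab fun t _ => (exp_pos _).le)
  linarith

lemma erf_add_sub_erf_le {s t c : ℝ} (hs : 0 ≤ s) (hst : s ≤ t) (hc : 0 ≤ c) :
    erf (t + c) - erf t ≤ erf (s + c) - erf s := by
  rw [erf_sub_erf, erf_sub_erf]
  exact mul_le_mul_of_nonneg_left
    (intervalIntegral.integral_add_le_of_antitoneOn continuous_exp_neg_sq
      (antitoneOn_exp_neg_sq.mono (Set.Ici_subset_Ici.2 hs)) hst hc) (by positivity)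

section SumCompSum

variable {ι κ : Type*} [Fintype κ] {g : ℝ → ℝ} {w : κ → ι → ℝ}

lemma sum_comp_sum_le_of_subset (hg : Monotone g) (hw : ∀ j i, 0 ≤ w j i)
    {S T : Finset ι} (hST : S ⊆ T) :
    ∑ j, g (∑ i ∈ S, w j i) ≤ ∑ j, g (∑ i ∈ T, w j i) :=
  sum_le_sum fun j _ => hg (sum_le_sum_of_subset_of_nonneg hST fun i _ _ => hw j i)

lemma sum_comp_sum_insert_sub_le [DecidableEq ι]
    (hg : ∀ ⦃s t c⦄, 0 ≤ s → s ≤ t → 0 ≤ c → g (t + c) - g t ≤ g (s + c) - g s)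
    (hw : ∀ j i, 0 ≤ w j i) {S T : Finset ι} (hST : S ⊆ T) {x : ι} (hx : x ∉ T) :
    ∑ j, g (∑ i ∈ insert x T, w j i) - ∑ j, g (∑ i ∈ T, w j i)
      ≤ ∑ j, g (∑ i ∈ insert x S, w j i) - ∑ j, g (∑ i ∈ S, w j i) := by
  rw [← sum_sub_distrib, ← sum_sub_distrib]
  refine sum_le_sum fun j _ => ?_
  rw [sum_insert hx, sum_insert fun hxS => hx (hST hxS), add_comm (w j x), add_comm (w j x)]
  exact hg (sum_nonneg fun i _ => hw j i)
    (sum_le_sum_of_subset_of_nonneg hST fun i _ _ => hw j i) (hw j x)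

end SumCompSum

/-- For nonnegative B and σ > 0, the set function
h(S) = (1/2) Σ_j (1 + erf((Σ_{i∈S} B j i)/(σ√2))) is monotone nondecreasing
and submodular. -/
theorem stmt_6 (N : ℕ) (B : Matrix (Fin N) (Fin N) ℝ)
    (hB : ∀ j i, 0 ≤ B j i) (σ : ℝ) (hσ : 0 < σ) :
    (∀ S T : Finset (Fin N), S ⊆ T →
      (1 / 2) * ∑ j, (1 + erf ((∑ i ∈ S, B j i) / (σ * Real.sqrt 2)))
        ≤ (1 / 2) * ∑ j, (1 + erf ((∑ i ∈ T, B j i) / (σ * Real.sqrt 2)))) ∧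
    (∀ S T : Finset (Fin N), S ⊆ T → ∀ x ∉ T,
      (1 / 2) * ∑ j, (1 + erf ((∑ i ∈ insert x T, B j i) / (σ * Real.sqrt 2)))
          - (1 / 2) * ∑ j, (1 + erf ((∑ i ∈ T, B j i) / (σ * Real.sqrt 2)))
        ≤ (1 / 2) * ∑ j, (1 + erf ((∑ i ∈ insert x S, B j i) / (σ * Real.sqrt 2)))
          - (1 / 2) * ∑ j, (1 + erf ((∑ i ∈ S, B j i) / (σ * Real.sqrt 2)))) := by
  have ha : 0 < σ * sqrt 2 := by positivity
  have hmono : Monotone fun y => 1 / 2 * (1 + erf (y / (σ * sqrt 2))) := fun y z hyz => by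
    have := erf_monotone (div_le_div_of_nonneg_right hyz ha.le)
    dsimp only
    linarith
  have hincr : ∀ ⦃s t c : ℝ⦄, 0 ≤ s → s ≤ t → 0 ≤ c →
      1 / 2 * (1 + erf ((t + c) / (σ * sqrt 2))) - 1 / 2 * (1 + erf (t / (σ * sqrt 2)))
        ≤ 1 / 2 * (1 + erf ((s + c) / (σ * sqrt 2))) - 1 / 2 * (1 + erf (s / (σ * sqrt 2))) := by
    intro s t c hs hst hc
    have := erf_add_sub_erf_le (div_nonneg hs ha.le) (div_le_div_of_nonneg_right hst ha.le)
      (div_nonneg hc ha.le)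
    rw [← add_div, ← add_div] at this
    linarith
  simp only [mul_sum]
  exact ⟨fun S T hST => sum_comp_sum_le_of_subset hmono hB hST,
    fun S T hST x hx => sum_comp_sum_insert_sub_le
      (g := fun y => 1 / 2 * (1 + erf (y / (σ * sqrt 2)))) hincr hB hST hx⟩
end

section
/- Let h be a monotone nondecreasing submodular set function on subsets of a finite set V with h(∅) = 0, and let S_r be the set produced by the greedy algorithm that iteratively adds the element with largest marginal gain for r steps. Then h(S_r) ≥ (1 − (1 − 1/r)^r) · max_{|T| ≤ r} h(T) ≥ (1 − 1/e) · max_{|T| ≤ r} h(T). -/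
/-!
Let `T` be a competitor with `|T| ≤ r` and let `g` be the gain of a greedy step from `S`. By
monotonicity and submodularity, `h T - h S ≤ h (S ∪ T) - h S` is at most the sum of the marginal
gains of the elements of `T` over `S`, each of which is at most `g`; so `g ≥ (h T - h S) / r`.
Hence every greedy step shrinks the gap `h T - h S` by the factor `1 - 1/r`, and after `r` steps
the gap is at most `(1 - 1/r)^r h T ≤ h T / e`.
-/

section SetFunction

variable {V : Type*} [DecidableEq V]

def IsSubmodular (h : Finset V → ℝ) : Prop :=
  ∀ ⦃S T : Finset V⦄, S ⊆ T → ∀ x ∉ T, h (insert x T) - h T ≤ h (insert x S) - h S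

variable {h : Finset V → ℝ}

theorem IsSubmodular.sub_le_sum_marginal (hmono : Monotone h) (hsub : IsSubmodular h)
    (A B : Finset V) : h (B ∪ A) - h B ≤ ∑ x ∈ A, (h (insert x B) - h B) := by
  induction A using Finset.induction_on with
  | empty => simp
  | @insert a A ha ih =>
    rw [Finset.sum_insert ha, Finset.union_insert]
    by_cases haBA : a ∈ B ∪ A
    · have hgain_nonneg : 0 ≤ h (insert a B) - h B := sub_nonneg.2 (hmono (Finset.subset_insert a B))
      rw [Finset.insert_eq_of_mem haBA]
      linarith
    · linarith [hsub Finset.subset_union_left a haBA]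

theorem IsSubmodular.sub_le_card_mul (hmono : Monotone h) (hsub : IsSubmodular h)
    {S : Finset V} {g : ℝ} (hg : ∀ y, h (insert y S) - h S ≤ g) (T : Finset V) :
    h T - h S ≤ T.card * g :=
  calc h T - h S ≤ h (S ∪ T) - h S := by linarith [hmono (Finset.subset_union_right : T ⊆ S ∪ T)]
    _ ≤ ∑ y ∈ T, (h (insert y S) - h S) := hsub.sub_le_sum_marginal hmono T S
    _ ≤ T.card * g := by
      simpa using Finset.sum_le_sum fun y (_ : y ∈ T) => hg y

theorem IsSubmodular.greedy_step (hmono : Monotone h) (hsub : IsSubmodular h)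
    {S : Finset V} {x : V} (hx : ∀ y ∉ S, h (insert y S) ≤ h (insert x S))
    {r : ℕ} (hr : 0 < r) {T : Finset V} (hT : T.card ≤ r) :
    h T - h (insert x S) ≤ (1 - 1 / r) * (h T - h S) := by
  set g := h (insert x S) - h S
  have hg0 : 0 ≤ g := sub_nonneg.2 (hmono (Finset.subset_insert x S))
  have hg : ∀ y, h (insert y S) - h S ≤ g := by
    intro y
    by_cases hy : y ∈ S
    · simpa [Finset.insert_eq_of_mem hy] using hg0
    · linarith [hx y hy]
  have hgap : h T - h S ≤ r * g :=
    (hsub.sub_le_card_mul hmono hg T).trans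
      (mul_le_mul_of_nonneg_right (by exact_mod_cast hT) hg0)
  have hgain : (h T - h S) / r ≤ g := by
    rw [div_le_iff₀ (by exact_mod_cast hr)]
    linarith
  have hfactor : (1 - 1 / (r : ℝ)) * (h T - h S) = (h T - h S) - (h T - h S) / r := by ring
  linarith

theorem IsSubmodular.greedy_gap_le (hmono : Monotone h) (hsub : IsSubmodular h)
    (hempty : h ∅ = 0) {r : ℕ} {S : ℕ → Finset V} (hS0 : S 0 = ∅)
    (hgreedy : ∀ k < r, ∃ x, S (k + 1) = insert x (S k) ∧
      ∀ y ∉ S k, h (insert y (S k)) ≤ h (insert x (S k)))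
    {T : Finset V} (hT : T.card ≤ r) :
    ∀ k ≤ r, h T - h (S k) ≤ (1 - 1 / (r : ℝ)) ^ k * h T := by
  intro k hk
  induction k with
  | zero => simp [hS0, hempty]
  | succ k ih =>
    obtain ⟨x, hSx, hx⟩ := hgreedy k hk
    have hr : (1 : ℝ) ≤ r := by exact_mod_cast Nat.one_le_of_lt hk
    have hfactor : 0 ≤ 1 - 1 / (r : ℝ) := by
      rw [sub_nonneg, div_le_one (by linarith)]
      exact hr
    calc h T - h (S (k + 1)) ≤ (1 - 1 / (r : ℝ)) * (h T - h (S k)) := by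
          rw [hSx]
          exact hsub.greedy_step hmono hx (by omega) hT
      _ ≤ (1 - 1 / (r : ℝ)) * ((1 - 1 / (r : ℝ)) ^ k * h T) :=
          mul_le_mul_of_nonneg_left (ih (by omega)) hfactor
      _ = (1 - 1 / (r : ℝ)) ^ (k + 1) * h T := by ring

end SetFunction

theorem stmt_13_general {V : Type*} [DecidableEq V]
    (h : Finset V → ℝ)
    (hmono : ∀ S T : Finset V, S ⊆ T → h S ≤ h T)
    (hsub : ∀ S T : Finset V, S ⊆ T → ∀ x ∉ T,
      h (insert x T) - h T ≤ h (insert x S) - h S)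
    (hempty : h ∅ = 0)
    (r : ℕ) (hr : 1 ≤ r)
    (S : ℕ → Finset V) (hS0 : S 0 = ∅)
    (hgreedy : ∀ k < r, ∃ x ∉ S k, S (k + 1) = insert x (S k) ∧
      ∀ y ∉ S k, h (insert y (S k)) ≤ h (insert x (S k))) :
    ∀ T : Finset V, T.card ≤ r →
      (1 - (1 - 1 / (r : ℝ)) ^ r) * h T ≤ h (S r) ∧
      (1 - 1 / Real.exp 1) * h T ≤ h (S r) := by
  intro T hT
  have hmono' : Monotone h := fun A B => hmono A B
  have hsub' : IsSubmodular h := fun A B => hsub A B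
  have hgap := hsub'.greedy_gap_le hmono' hempty hS0
    (fun k hk => (hgreedy k hk).imp fun _ hx => hx.2) hT r le_rfl
  have hT0 : 0 ≤ h T := hempty ▸ hmono ∅ T (Finset.empty_subset T)
  have hexp : (1 - 1 / (r : ℝ)) ^ r ≤ 1 / Real.exp 1 := by
    simpa [Real.exp_neg] using Real.one_sub_div_pow_le_exp_neg (t := 1) (by exact_mod_cast hr)
  have hratio : (1 - (1 - 1 / (r : ℝ)) ^ r) * h T ≤ h (S r) := by linarith
  exact ⟨hratio, (mul_le_mul_of_nonneg_right (by linarith) hT0).trans hratio⟩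

/-- Nemhauser–Wolsey–Fisher greedy guarantee. If h is monotone
nondecreasing, submodular, with h(∅) = 0, and S_k is the greedy sequence
(S_0 = ∅, S_{k+1} adds an element of largest marginal gain), then
h(S_r) ≥ (1 − (1 − 1/r)^r) · max_{|T| ≤ r} h T ≥ (1 − 1/e) · max_{|T| ≤ r} h T. -/
theorem stmt_13 {V : Type*} [Fintype V] [DecidableEq V]
    (h : Finset V → ℝ)
    (hmono : ∀ S T : Finset V, S ⊆ T → h S ≤ h T)
    (hsub : ∀ S T : Finset V, S ⊆ T → ∀ x ∉ T,
      h (insert x T) - h T ≤ h (insert x S) - h S)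
    (hempty : h ∅ = 0)
    (r : ℕ) (hr : 1 ≤ r) (hcard : r ≤ Fintype.card V)
    (S : ℕ → Finset V) (hS0 : S 0 = ∅)
    (hgreedy : ∀ k < r, ∃ x ∉ S k, S (k + 1) = insert x (S k) ∧
      ∀ y ∉ S k, h (insert y (S k)) ≤ h (insert x (S k))) :
    ∀ T : Finset V, T.card ≤ r →
      (1 - (1 - 1 / (r : ℝ)) ^ r) * h T ≤ h (S r) ∧
      (1 - 1 / Real.exp 1) * h T ≤ h (S r) :=
  stmt_13_general h hmono hsub hempty r hr S hS0 hgreedy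
end
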